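/- Let C be a coassociative counital coalgebra over a field k. The cokernel of an injective morphism from a finitely copresented left C-comodule to a finitely cogenerated left C-comodule is finitely cogenerated. -/

import Mathlib

/-
Over a field, cofree comodules are injective: a comodule map `α : M → C ⊗ X` is recovered from its
corestriction `(ε ⊗ id) ∘ α : M → X`, and every linear map `N → X` corestricts back to a comodule
map `N → C ⊗ X`; so `α` extends along an injective comodule map `M → N` by extending its
corestriction linearly.

Present `M` as the kernel of `g : C ⊗ V → C ⊗ W` via `e`, and embed `N` into `C ⊗ U` via `f`.
Extend `e` along `φ` to `ε : N → C ⊗ V`, and `f ∘ φ` along `e` to `t : C ⊗ V → C ⊗ U`. A diagram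
chase gives `φ(M) = ker (g ∘ ε) ∩ ker (f - t ∘ ε)`, so `N / φ(M)` embeds into `C ⊗ (W × U)`.
-/

open TensorProduct LinearMap

section Core

variable (k : Type) [Field k]
variable (C : Type) [AddCommGroup C] [Module k C] [Coalgebra k C]

/-- Axioms for a left `C`-comodule structure given by a coaction map `ρ`. -/
structure IsComod {M : Type} [AddCommGroup M] [Module k M]
    (ρ : M →ₗ[k] C ⊗[k] M) : Prop where
  coassoc : ∀ m : M, (TensorProduct.assoc k C C M)
      ((CoalgebraStruct.comul (R := k) (A := C)).rTensor M (ρ m)) = ρ.lTensor C (ρ m)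
  counit : ∀ m : M, (TensorProduct.lid k M)
      ((CoalgebraStruct.counit (R := k) (A := C)).rTensor M (ρ m)) = m

/-- A `k`-linear map between comodules is a comodule morphism. -/
def IsComodHom {M N : Type} [AddCommGroup M] [Module k M] [AddCommGroup N] [Module k N]
    (ρM : M →ₗ[k] C ⊗[k] M) (ρN : N →ₗ[k] C ⊗[k] N) (f : M →ₗ[k] N) : Prop :=
  f.lTensor C ∘ₗ ρM = ρN ∘ₗ f

/-- The coaction of the cofree left comodule `C ⊗ V`. -/
noncomputable def cofreeCoaction (V : Type) [AddCommGroup V] [Module k V] :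
    C ⊗[k] V →ₗ[k] C ⊗[k] (C ⊗[k] V) :=
  (TensorProduct.assoc k C C V).toLinearMap ∘ₗ
    (CoalgebraStruct.comul (R := k) (A := C)).rTensor V

/-- A left comodule is finitely cogenerated if it admits an injective comodule
morphism into a cofree comodule with finite-dimensional space of cogenerators. -/
def FinCogen {M : Type} [AddCommGroup M] [Module k M]
    (ρ : M →ₗ[k] C ⊗[k] M) : Prop :=
  ∃ (V : Type) (_ : AddCommGroup V) (_ : Module k V), FiniteDimensional k V ∧
    ∃ f : M →ₗ[k] C ⊗[k] V, Function.Injective f ∧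
      IsComodHom k C ρ (cofreeCoaction k C V) f

end Core

section SubQuot

variable (k : Type) [Field k]
variable (C : Type) [AddCommGroup C] [Module k C] [Coalgebra k C]
variable {M : Type} [AddCommGroup M] [Module k M]

/-- A subspace `N ⊆ M` is a subcomodule if the coaction takes it into the image of
`C ⊗ N` in `C ⊗ M`. -/
def IsSubcomod (ρ : M →ₗ[k] C ⊗[k] M) (N : Submodule k M) : Prop :=
  ∀ m ∈ N, ρ m ∈ LinearMap.range (N.subtype.lTensor C)

/-- The quotient comodule `M/N` is finitely cogenerated; equivalently, there is a
morphism of comodules from `M` to a cofree comodule with a finite-dimensional space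
of cogenerators whose kernel is exactly `N`. -/
def QuotFinCogen (ρ : M →ₗ[k] C ⊗[k] M) (N : Submodule k M) : Prop :=
  ∃ (V : Type) (_ : AddCommGroup V) (_ : Module k V), FiniteDimensional k V ∧
    ∃ g : M →ₗ[k] C ⊗[k] V, IsComodHom k C ρ (cofreeCoaction k C V) g ∧
      LinearMap.ker g = N

/-- A comodule is co-Noetherian if all its quotient comodules are finitely
cogenerated. -/
def CoNoetherianComod (ρ : M →ₗ[k] C ⊗[k] M) : Prop :=
  ∀ N : Submodule k M, IsSubcomod k C ρ N → QuotFinCogen k C ρ N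

/-- A comodule is Artinian if every descending chain of its subcomodules
terminates. -/
def ArtinianComod (ρ : M →ₗ[k] C ⊗[k] M) : Prop :=
  ∀ f : ℕ → Submodule k M, (∀ n, IsSubcomod k C ρ (f n)) →
    (∀ n, f (n + 1) ≤ f n) → ∃ n, ∀ m, n ≤ m → f m = f n

end SubQuot

section FinCopres

variable (k : Type) [Field k]
variable (C : Type) [AddCommGroup C] [Module k C] [Coalgebra k C]
variable {M : Type} [AddCommGroup M] [Module k M]

/-- A left comodule is finitely copresented if it is (isomorphic to) the kernel of a
morphism of finitely cogenerated cofree comodules. -/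
def FinCopres (ρ : M →ₗ[k] C ⊗[k] M) : Prop :=
  ∃ (V : Type) (_ : AddCommGroup V) (_ : Module k V)
    (W : Type) (_ : AddCommGroup W) (_ : Module k W),
    FiniteDimensional k V ∧ FiniteDimensional k W ∧
    ∃ g : C ⊗[k] V →ₗ[k] C ⊗[k] W,
      IsComodHom k C (cofreeCoaction k C V) (cofreeCoaction k C W) g ∧
      ∃ e : M →ₗ[k] C ⊗[k] V, Function.Injective e ∧
        IsComodHom k C ρ (cofreeCoaction k C V) e ∧
        LinearMap.range e = LinearMap.ker g

end FinCopres

open CoalgebraStruct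

lemma LinearMap.ker_comp_inf_ker_sub_eq_range {R : Type} [Ring R]
    {M N P Q U : Type} [AddCommGroup M] [Module R M] [AddCommGroup N] [Module R N]
    [AddCommGroup P] [Module R P] [AddCommGroup Q] [Module R Q] [AddCommGroup U] [Module R U]
    {φ : M →ₗ[R] N} {e : M →ₗ[R] P} {g : P →ₗ[R] Q} {f : N →ₗ[R] U} {ε : N →ₗ[R] P}
    {t : P →ₗ[R] U} (he : range e = ker g) (hf : Function.Injective f) (hε : ε ∘ₗ φ = e)
    (ht : t ∘ₗ e = f ∘ₗ φ) :
    ker (g ∘ₗ ε) ⊓ ker (f - t ∘ₗ ε) = range φ := by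
  apply le_antisymm
  · rintro n ⟨hgε, hftε⟩
    obtain ⟨m, hm⟩ : ε n ∈ range e := he ▸ hgε
    refine ⟨m, hf ?_⟩
    have hfn : f n = t (ε n) := sub_eq_zero.mp hftε
    rw [hfn, ← hm]
    exact congr($ht m).symm
  · rintro _ ⟨m, rfl⟩
    have hεφ : ε (φ m) = e m := congr($hε m)
    have hge : g (e m) = 0 := mem_ker.mp (he ▸ mem_range_self e m)
    have htφ : t (e m) = f (φ m) := congr($ht m)
    simp [hεφ, hge, htφ]

section Comodule

variable {k : Type} [Field k] {C : Type} [AddCommGroup C] [Module k C]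
variable {M N P X Y : Type} [AddCommGroup M] [Module k M] [AddCommGroup N] [Module k N]
  [AddCommGroup P] [Module k P] [AddCommGroup X] [Module k X] [AddCommGroup Y] [Module k Y]
variable {ρM : M →ₗ[k] C ⊗[k] M} {ρN : N →ₗ[k] C ⊗[k] N} {ρP : P →ₗ[k] C ⊗[k] P}

lemma IsComodHom.comp {g : N →ₗ[k] P} {f : M →ₗ[k] N} (hg : IsComodHom k C ρN ρP g)
    (hf : IsComodHom k C ρM ρN f) : IsComodHom k C ρM ρP (g ∘ₗ f) := by
  unfold IsComodHom at *
  rw [lTensor_comp, comp_assoc, hf, ← comp_assoc, hg, comp_assoc]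

lemma IsComodHom.add {f g : M →ₗ[k] N} (hf : IsComodHom k C ρM ρN f)
    (hg : IsComodHom k C ρM ρN g) : IsComodHom k C ρM ρN (f + g) := by
  unfold IsComodHom at *
  rw [lTensor_add, add_comp, comp_add, hf, hg]

lemma IsComodHom.sub {f g : M →ₗ[k] N} (hf : IsComodHom k C ρM ρN f)
    (hg : IsComodHom k C ρM ρN g) : IsComodHom k C ρM ρN (f - g) := by
  unfold IsComodHom at *
  rw [lTensor_sub, sub_comp, comp_sub, hf, hg]

variable [Coalgebra k C]

variable (k C X) in
noncomputable def cofreeCounit : C ⊗[k] X →ₗ[k] X :=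
  (TensorProduct.lid k X).toLinearMap ∘ₗ (counit (R := k) (A := C)).rTensor X

lemma cofreeCoaction_tmul (c : C) (x : X) :
    cofreeCoaction k C X (c ⊗ₜ x) = ((TensorProduct.mk k C X).flip x).lTensor C (comul c) := by
  simp only [cofreeCoaction, coe_comp, LinearEquiv.coe_coe, Function.comp_apply, rTensor_tmul]
  induction comul (R := k) c using TensorProduct.induction_on with
  | zero => simp
  | tmul a b => simp
  | add u w hu hw => simp only [add_tmul, map_add, hu, hw]

lemma isComodHom_lTensor (γ : X →ₗ[k] Y) :
    IsComodHom k C (cofreeCoaction k C X) (cofreeCoaction k C Y) (γ.lTensor C) := by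
  have hγ (x : X) : γ.lTensor C ∘ₗ (TensorProduct.mk k C X).flip x =
      (TensorProduct.mk k C Y).flip (γ x) := by
    ext; simp
  ext c x
  simp only [AlgebraTensorModule.curry_apply, curry_apply, restrictScalars_apply, coe_comp,
    Function.comp_apply, lTensor_tmul, cofreeCoaction_tmul, ← lTensor_comp_apply, hγ]

lemma cofreeCoaction_isComodHom :
    IsComodHom k C (cofreeCoaction k C X) (cofreeCoaction k C (C ⊗[k] X))
      (cofreeCoaction k C X) := by
  have hx (x : X) : cofreeCoaction k C X ∘ₗ (TensorProduct.mk k C X).flip x =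
      ((TensorProduct.mk k C X).flip x).lTensor C ∘ₗ comul := by
    ext; simp [cofreeCoaction_tmul]
  -- On `c ⊗ x` both sides are `(id ⊗ (· ⊗ x))` applied to `(id ⊗ Δ) (Δ c)`, using coassociativity.
  ext c x
  have hnat := LinearMap.congr_fun (isComodHom_lTensor (C := C) ((TensorProduct.mk k C X).flip x))
    (comul c)
  simp only [coe_comp, Function.comp_apply] at hnat
  simp only [AlgebraTensorModule.curry_apply, curry_apply, restrictScalars_apply, coe_comp,
    Function.comp_apply, cofreeCoaction_tmul, ← lTensor_comp_apply, hx, ← hnat]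
  rw [lTensor_comp_apply, cofreeCoaction, comp_apply, LinearEquiv.coe_coe, Coalgebra.coassoc_apply]

lemma lTensor_cofreeCounit_comp_cofreeCoaction :
    (cofreeCounit k C X).lTensor C ∘ₗ cofreeCoaction k C X = LinearMap.id := by
  have hx (x : X) : cofreeCounit k C X ∘ₗ (TensorProduct.mk k C X).flip x =
      LinearMap.toSpanSingleton k X x ∘ₗ counit := by
    ext; simp [cofreeCounit]
  ext c x
  simp only [AlgebraTensorModule.curry_apply, curry_apply, restrictScalars_apply, coe_comp,
    Function.comp_apply, cofreeCoaction_tmul, ← lTensor_comp_apply, hx]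
  rw [lTensor_comp_apply, Coalgebra.lTensor_counit_comul]
  simp

lemma IsComod.isComodHom_coaction (h : IsComod k C ρM) :
    IsComodHom k C ρM (cofreeCoaction k C M) ρM :=
  LinearMap.ext fun m => (h.coassoc m).symm

lemma IsComodHom.eq_lTensor_cofreeCounit_comp {α : M →ₗ[k] C ⊗[k] X}
    (hα : IsComodHom k C ρM (cofreeCoaction k C X) α) :
    α = (cofreeCounit k C X ∘ₗ α).lTensor C ∘ₗ ρM := by
  rw [lTensor_comp, comp_assoc, hα, ← comp_assoc, lTensor_cofreeCounit_comp_cofreeCoaction,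
    id_comp]

lemma IsComodHom.exists_extension {α : M →ₗ[k] C ⊗[k] X}
    (hα : IsComodHom k C ρM (cofreeCoaction k C X) α)
    (hρN : IsComodHom k C ρN (cofreeCoaction k C N) ρN) {φ : M →ₗ[k] N}
    (hφ : IsComodHom k C ρM ρN φ) (hinj : Function.Injective φ) :
    ∃ α' : N →ₗ[k] C ⊗[k] X, IsComodHom k C ρN (cofreeCoaction k C X) α' ∧ α' ∘ₗ φ = α := by
  obtain ⟨l, hl⟩ := φ.exists_leftInverse_of_injective (ker_eq_bot.mpr hinj)
  refine ⟨(cofreeCounit k C X ∘ₗ α ∘ₗ l).lTensor C ∘ₗ ρN, (isComodHom_lTensor _).comp hρN, ?_⟩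
  rw [comp_assoc, ← hφ, ← comp_assoc, ← lTensor_comp, comp_assoc, comp_assoc, hl, comp_id,
    ← hα.eq_lTensor_cofreeCounit_comp]

lemma QuotFinCogen.inf {P Q : Submodule k M} (hP : QuotFinCogen k C ρM P)
    (hQ : QuotFinCogen k C ρM Q) : QuotFinCogen k C ρM (P ⊓ Q) := by
  obtain ⟨X, _, _, hX, a, ha, rfl⟩ := hP
  obtain ⟨Y, _, _, hY, b, hb, rfl⟩ := hQ
  refine ⟨X × Y, _, _, inferInstance, (inl k X Y).lTensor C ∘ₗ a + (inr k X Y).lTensor C ∘ₗ b,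
    ((isComodHom_lTensor _).comp ha).add ((isComodHom_lTensor _).comp hb), ?_⟩
  have hinl : (prodRight k k C X Y).toLinearMap ∘ₗ (inl k X Y).lTensor C = inl k _ _ :=
    TensorProduct.ext' fun c x => by simp
  have hinr : (prodRight k k C X Y).toLinearMap ∘ₗ (inr k X Y).lTensor C = inr k _ _ :=
    TensorProduct.ext' fun c y => by simp
  have hprod : (prodRight k k C X Y).toLinearMap ∘ₗ
      ((inl k X Y).lTensor C ∘ₗ a + (inr k X Y).lTensor C ∘ₗ b) = a.prod b := by
    rw [comp_add, ← comp_assoc, hinl, ← comp_assoc, hinr]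
    ext n <;> simp
  rw [← LinearEquiv.ker_comp (prodRight k k C X Y), hprod, ker_prod]

end Comodule

theorem cokernel_finCopres_to_finCogen_general
    (k : Type) [Field k]
    (C : Type) [AddCommGroup C] [Module k C] [Coalgebra k C]
    (M : Type) [AddCommGroup M] [Module k M]
    (ρM : M →ₗ[k] C ⊗[k] M) (hMcp : FinCopres k C ρM)
    (N : Type) [AddCommGroup N] [Module k N]
    (ρN : N →ₗ[k] C ⊗[k] N) (hN : IsComod k C ρN) (hNfc : FinCogen k C ρN)
    (φ : M →ₗ[k] N) (hφ : IsComodHom k C ρM ρN φ) (hinj : Function.Injective φ) :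
    QuotFinCogen k C ρN (LinearMap.range φ) := by
  obtain ⟨V, _, _, W, _, _, -, hW, g, hg, e, he_inj, he, he_range⟩ := hMcp
  obtain ⟨U, _, _, hU, f, hf_inj, hf⟩ := hNfc
  obtain ⟨ε, hε, hεφ⟩ := he.exists_extension hN.isComodHom_coaction hφ hinj
  obtain ⟨t, ht, hte⟩ := (hf.comp hφ).exists_extension cofreeCoaction_isComodHom he he_inj
  rw [← ker_comp_inf_ker_sub_eq_range he_range hf_inj hεφ hte]
  exact QuotFinCogen.inf ⟨W, _, _, hW, g ∘ₗ ε, hg.comp hε, rfl⟩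
    ⟨U, _, _, hU, f - t ∘ₗ ε, hf.sub (ht.comp hε), rfl⟩

/-- Lemma 1.7(a): the cokernel of an injective morphism from a finitely copresented
left `C`-comodule `M` to a finitely cogenerated left `C`-comodule `N` is finitely
cogenerated; i.e. the quotient comodule `N / φ(M)` is finitely cogenerated. -/
theorem cokernel_finCopres_to_finCogen
    (k : Type) [Field k]
    (C : Type) [AddCommGroup C] [Module k C] [Coalgebra k C]
    (M : Type) [AddCommGroup M] [Module k M]
    (ρM : M →ₗ[k] C ⊗[k] M) (hM : IsComod k C ρM) (hMcp : FinCopres k C ρM)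
    (N : Type) [AddCommGroup N] [Module k N]
    (ρN : N →ₗ[k] C ⊗[k] N) (hN : IsComod k C ρN) (hNfc : FinCogen k C ρN)
    (φ : M →ₗ[k] N) (hφ : IsComodHom k C ρM ρN φ) (hinj : Function.Injective φ) :
    QuotFinCogen k C ρN (LinearMap.range φ) :=
  cokernel_finCopres_to_finCogen_general k C M ρM hMcp N ρN hN hNfc φ hφ hinj
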